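/- arXiv:2010.11913 — 3 statements merged into one kernel-verified Lean document; each statement's English description precedes it below -/
import Mathlib

section
/- (Lemma 3.1, nodewise version.) Let α > 0, β > 0 and let a, û, u_prev, u_cur, μ_prev, μ_cur, λ_prev, λ be real numbers such that (i) λ = max(λ_prev - β·(u_cur - a), 0) and (ii) u_cur = u_prev - α·(u_prev - û + μ_prev - λ_prev). Define τ = λ - λ_prev, ξ = μ_cur - μ_prev, and η = u_cur - u_prev. Then λ = max( -(1/α)·(u_cur - α·(u_cur - û + μ_cur) - a) + (1 - 1/(α·β))·τ + (1/α - 1)·η - ξ , 0 ). -/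
/-- Lemma 3.1 (nodewise version): expression of the Uzawa multiplier `λ` as a
positive part, where `[x]₊ = max x 0`. -/
theorem lemma31_nodewise (α β a uhat u_prev u_cur μ_prev μ_cur lam_prev lam : ℝ)
    (hα : 0 < α) (hβ : 0 < β)
    (h1 : lam = max (lam_prev - β * (u_cur - a)) 0)
    (h2 : u_cur = u_prev - α * (u_prev - uhat + μ_prev - lam_prev))
    (τ ξ η : ℝ)
    (hτ : τ = lam - lam_prev) (hξ : ξ = μ_cur - μ_prev) (hη : η = u_cur - u_prev) :
    lam = max (-(1 / α) * (u_cur - α * (u_cur - uhat + μ_cur) - a)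
        + (1 - 1 / (α * β)) * τ + (1 / α - 1) * η - ξ) 0 := by
  have hα' := hα.ne'
  have hβ' := hβ.ne'
  rcases le_total (lam_prev - β * (u_cur - a)) 0 with hc | hc
  · have hl : lam = 0 := by rw [h1]; exact max_eq_right hc
    have hA : -(1 / α) * (u_cur - α * (u_cur - uhat + μ_cur) - a)
        + (1 - 1 / (α * β)) * τ + (1 / α - 1) * η - ξ
        = (lam_prev - β * (u_cur - a)) / (α * β) := by
      subst hτ hξ hη hl
      rw [h2]; field_simp; ring
    rw [hl, hA, max_eq_right]
    exact div_nonpos_of_nonpos_of_nonneg hc (mul_pos hα hβ).le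
  · have hl : lam = lam_prev - β * (u_cur - a) := by rw [h1]; exact max_eq_left hc
    have hA : -(1 / α) * (u_cur - α * (u_cur - uhat + μ_cur) - a)
        + (1 - 1 / (α * β)) * τ + (1 / α - 1) * η - ξ
        = lam := by
      subst hτ hξ hη
      rw [hl, h2]; field_simp; ring
    rw [hA, max_eq_left]
    linarith
end

section
/- (Existence of the conservative shift μ*.) Let (Ω, μ) be a measure space with 0 < μ(Ω) < ∞, let f ∈ L¹(Ω, μ), and let a, c, C ∈ ℝ with c ≤ C be such that c ≤ f(x) ≤ C for μ-almost every x. Assume c ≤ a and ∫_Ω f dμ ≥ a·μ(Ω). Then there exists μ* ∈ [c - a, C - a] such that ∫_Ω max(f(x) - μ*, a) dμ(x) = ∫_Ω f dμ. -/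
/-!
The truncated mass `s ↦ ∫ max (f - s) a` is Lipschitz in the shift `s`. At `s = c - a ≤ 0` it
dominates `∫ f`, and at `s = C - a` the integrand is a.e. the constant `a`, so the mass there is
`a · μ(Ω) ≤ ∫ f`. The intermediate value theorem gives the shift.
-/

open MeasureTheory

section TruncatedShift

variable {Ω : Type*} [MeasurableSpace Ω] {μ : Measure Ω} {f : Ω → ℝ}

theorem lipschitzWith_integral_max_sub [IsFiniteMeasure μ] (hf : Integrable f μ) (a : ℝ) :
    LipschitzWith (μ Set.univ).toNNReal (fun s => ∫ x, max (f x - s) a ∂μ) := by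
  have hint (s : ℝ) : Integrable (fun x => max (f x - s) a) μ :=
    (hf.sub (integrable_const s)).sup (integrable_const a)
  refine LipschitzWith.of_dist_le_mul fun s t => ?_
  rw [Real.dist_eq, ← integral_sub (hint s) (hint t), ENNReal.coe_toNNReal_eq_toReal,
    mul_comm, ← measureReal_def, ← Real.norm_eq_abs]
  refine norm_integral_le_of_norm_le_const (Filter.Eventually.of_forall fun x => ?_)
  calc ‖max (f x - s) a - max (f x - t) a‖ ≤ |f x - s - (f x - t)| :=
        abs_max_sub_max_le_abs _ _ a
    _ = dist s t := by rw [Real.dist_eq, abs_sub_comm]; ring_nf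

theorem integral_le_integral_max_sub [IsFiniteMeasure μ] (hf : Integrable f μ) {s : ℝ}
    (hs : s ≤ 0) (a : ℝ) : ∫ x, f x ∂μ ≤ ∫ x, max (f x - s) a ∂μ :=
  integral_mono hf ((hf.sub (integrable_const s)).sup (integrable_const a))
    fun x => (by linarith : f x ≤ f x - s).trans (le_max_left _ a)

theorem integral_max_sub_eq_of_ae_le {s a : ℝ} (h : ∀ᵐ x ∂μ, f x - s ≤ a) :
    ∫ x, max (f x - s) a ∂μ = μ.real Set.univ * a := by
  rw [integral_congr_ae (h.mono fun x hx => max_eq_right hx), integral_const, smul_eq_mul]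

end TruncatedShift

theorem exists_conservative_shift_general {Ω : Type*} [MeasurableSpace Ω] (μ : Measure Ω)
    [IsFiniteMeasure μ]
    (f : Ω → ℝ) (hf : Integrable f μ) (a c C : ℝ) (hcC : c ≤ C)
    (hbound : ∀ᵐ x ∂μ, c ≤ f x ∧ f x ≤ C)
    (hca : c ≤ a) (hmass : a * (μ Set.univ).toReal ≤ ∫ x, f x ∂μ) :
    ∃ μstar ∈ Set.Icc (c - a) (C - a),
      (∫ x, max (f x - μstar) a ∂μ) = ∫ x, f x ∂μ := by
  have hcont := (lipschitzWith_integral_max_sub hf a).continuous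
  have hlow : ∫ x, f x ∂μ ≤ ∫ x, max (f x - (c - a)) a ∂μ :=
    integral_le_integral_max_sub hf (by linarith) a
  have hhigh : ∫ x, max (f x - (C - a)) a ∂μ ≤ ∫ x, f x ∂μ := by
    rw [integral_max_sub_eq_of_ae_le (hbound.mono fun x hx => by linarith [hx.2]),
      measureReal_def, mul_comm]
    exact hmass
  exact intermediate_value_Icc' (by linarith) hcont.continuousOn ⟨hhigh, hlow⟩

/-- Existence of the conservative shift `μ*`: there is `μ* ∈ [c - a, C - a]`
such that truncating `f - μ*` at level `a` preserves the total mass of `f`. -/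
theorem exists_conservative_shift {Ω : Type*} [MeasurableSpace Ω] (μ : Measure Ω)
    [IsFiniteMeasure μ] (hΩpos : 0 < μ Set.univ)
    (f : Ω → ℝ) (hf : Integrable f μ) (a c C : ℝ) (hcC : c ≤ C)
    (hbound : ∀ᵐ x ∂μ, c ≤ f x ∧ f x ≤ C)
    (hca : c ≤ a) (hmass : a * (μ Set.univ).toReal ≤ ∫ x, f x ∂μ) :
    ∃ μstar ∈ Set.Icc (c - a) (C - a),
      (∫ x, max (f x - μstar) a ∂μ) = ∫ x, f x ∂μ :=
  exists_conservative_shift_general μ f hf a c C hcC hbound hca hmass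
end

section
/- (The self-similar profile solves the thin-film equation.) Fix L > 0. Define u : ℝ → EuclideanSpace ℝ (Fin 2) → ℝ for t > 0 by u(t, x) = t^{-1/3}·(L² - ‖x‖²·t^{-1/3})² / 192. Then for every t > 0 and every x ∈ EuclideanSpace ℝ (Fin 2), ∂_t u(t,x) + ⟨∇_x u(t,·)(x), ∇_x(Δ_x u(t,·))(x)⟩ + u(t,x)·Δ_x(Δ_x u(t,·))(x) = 0; that is, u satisfies ∂_t u + ∇·( u ∇Δu ) = 0 (equation (2.9) with γ = 1 and mobility f(u) = u), using the expansion ∇·(u∇Δu) = ∇u·∇Δu + u·Δ²u. -/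
/-! At a fixed time `t` the profile is `A‖x‖⁴ + B‖x‖² + C` with coefficients polynomial in
`a = t^{-1/3}`. Functions of this shape have gradient `(4A‖x‖² + 2B) • x`, and in the plane the
Laplacian maps the family to itself, `Δ ↦ 16A‖x‖² + 4B`; together with
`d/dt t^{-1/3} = -(1/3) a⁴` this turns the equation into a polynomial identity in `a`, `L`, `‖x‖²`. -/

/-- The Laplacian of a function on two-dimensional Euclidean space: the sum of the
second partial derivatives in the directions of the standard orthonormal basis. -/
noncomputable def lap2 (u : EuclideanSpace ℝ (Fin 2) → ℝ)
    (x : EuclideanSpace ℝ (Fin 2)) : ℝ :=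
  ∑ i : Fin 2,
    fderiv ℝ (fun y => fderiv ℝ u y (EuclideanSpace.single i (1 : ℝ))) x
      (EuclideanSpace.single i (1 : ℝ))

open scoped RealInnerProductSpace

section RadialQuartic

variable {E : Type*} [NormedAddCommGroup E] [InnerProductSpace ℝ E]

def radialQuartic (A B C : ℝ) (y : E) : ℝ := A * ‖y‖ ^ 4 + B * ‖y‖ ^ 2 + C

theorem hasFDerivAt_radialQuartic (A B C : ℝ) (x : E) :
    HasFDerivAt (radialQuartic A B C) ((4 * A * ‖x‖ ^ 2 + 2 * B) • innerSL ℝ x) x := by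
  have hsq : HasFDerivAt (fun y : E => ‖y‖ ^ 2) (2 • innerSL ℝ x) x :=
    (hasStrictFDerivAt_norm_sq x).hasFDerivAt
  have hfun : radialQuartic A B C = fun y : E => A * (‖y‖ ^ 2) ^ 2 + B * ‖y‖ ^ 2 + C := by
    funext y
    rw [radialQuartic]
    ring
  rw [hfun]
  refine ((((hsq.pow 2).const_mul A).add (hsq.const_mul B)).add_const C).congr_fderiv ?_
  ext v
  simp
  ring

theorem fderiv_radialQuartic_apply (A B C : ℝ) (x v : E) :
    fderiv ℝ (radialQuartic A B C) x v = (4 * A * ‖x‖ ^ 2 + 2 * B) * ⟪x, v⟫ := by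
  simp [(hasFDerivAt_radialQuartic A B C x).fderiv]

theorem fderiv_fderiv_radialQuartic_apply (A B C : ℝ) (x v : E) :
    fderiv ℝ (fun y => fderiv ℝ (radialQuartic A B C) y v) x v
      = (4 * A * ‖x‖ ^ 2 + 2 * B) * ‖v‖ ^ 2 + 8 * A * ⟪x, v⟫ ^ 2 := by
  have hsq : HasFDerivAt (fun y : E => ‖y‖ ^ 2) (2 • innerSL ℝ x) x :=
    (hasStrictFDerivAt_norm_sq x).hasFDerivAt
  have hinner : HasFDerivAt (fun y : E => ⟪y, v⟫) (innerSL ℝ v) x := by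
    have : (fun y : E => ⟪y, v⟫) = innerSL ℝ v := by
      ext y
      simp [real_inner_comm]
    exact this ▸ (innerSL ℝ v).hasFDerivAt
  simp_rw [fderiv_radialQuartic_apply]
  have h : HasFDerivAt (fun y : E => (4 * A * ‖y‖ ^ 2 + 2 * B) * ⟪y, v⟫) _ x :=
    ((hsq.const_mul (4 * A)).add_const (2 * B)).mul hinner
  rw [h.fderiv]
  simp
  ring

theorem gradient_radialQuartic [CompleteSpace E] (A B C : ℝ) (x : E) :
    gradient (radialQuartic A B C) x = (4 * A * ‖x‖ ^ 2 + 2 * B) • x := by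
  refine HasGradientAt.gradient ?_
  rw [hasGradientAt_iff_hasFDerivAt]
  refine (hasFDerivAt_radialQuartic A B C x).congr_fderiv ?_
  ext v
  simp

end RadialQuartic

theorem lap2_radialQuartic (A B C : ℝ) :
    lap2 (radialQuartic A B C) = radialQuartic 0 (16 * A) (4 * B) := by
  funext x
  have hx : ‖x‖ ^ 2 = x 0 ^ 2 + x 1 ^ 2 := by
    simp [EuclideanSpace.norm_sq_eq, Fin.sum_univ_two]
  simp [lap2, radialQuartic, Fin.sum_univ_two, fderiv_fderiv_radialQuartic_apply,
    EuclideanSpace.inner_single_right, hx]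
  ring

theorem hasDerivAt_rpow_neg_one_third {t : ℝ} (ht : 0 < t) :
    HasDerivAt (fun s : ℝ => s ^ (-(1 / 3) : ℝ)) (-(1 / 3) * (t ^ (-(1 / 3) : ℝ)) ^ 4) t := by
  convert Real.hasDerivAt_rpow_const (p := -(1 / 3)) (Or.inl ht.ne') using 2
  rw [← Real.rpow_mul_natCast ht.le]
  norm_num

theorem self_similar_solves_thin_film_general (L : ℝ)
    (U : ℝ → EuclideanSpace ℝ (Fin 2) → ℝ)
    (hU : ∀ s : ℝ, ∀ y : EuclideanSpace ℝ (Fin 2),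
      U s y = s ^ (-(1 / 3) : ℝ) * (L ^ 2 - ‖y‖ ^ 2 * s ^ (-(1 / 3) : ℝ)) ^ 2 / 192) :
    ∀ t : ℝ, 0 < t → ∀ x : EuclideanSpace ℝ (Fin 2),
      deriv (fun s => U s x) t
        + (inner ℝ (gradient (U t) x) (gradient (fun y => lap2 (U t) y) x) : ℝ)
        + U t x * lap2 (fun y => lap2 (U t) y) x = 0 := by
  intro t ht x
  have ha := hasDerivAt_rpow_neg_one_third ht
  set a := t ^ (-(1 / 3) : ℝ)
  have hU_time : HasDerivAt (fun s => U s x)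
      (-(1 / 3) * a ^ 4 * ((L ^ 2 - ‖x‖ ^ 2 * a) ^ 2 - 2 * ‖x‖ ^ 2 * a * (L ^ 2 - ‖x‖ ^ 2 * a))
        / 192) t := by
    have h : HasDerivAt (fun s => s ^ (-(1 / 3) : ℝ) * (L ^ 2 - ‖x‖ ^ 2 * s ^ (-(1 / 3) : ℝ)) ^ 2
        / 192) _ t := (ha.mul (((ha.const_mul (‖x‖ ^ 2)).const_sub (L ^ 2)).pow 2)).div_const 192
    simp only [hU]
    refine h.congr_deriv ?_
    simp only [Pi.pow_apply]
    ring
  have hU_space : U t = radialQuartic (a ^ 3 / 192) (-(L ^ 2 * a ^ 2) / 96) (a * L ^ 4 / 192) := by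
    funext y
    rw [hU, radialQuartic]
    ring
  rw [hU_time.deriv, hU_space, lap2_radialQuartic, lap2_radialQuartic, gradient_radialQuartic,
    gradient_radialQuartic, real_inner_smul_left, real_inner_smul_right, real_inner_self_eq_norm_sq]
  simp only [radialQuartic]
  ring

/-- The self-similar profile `u(t,x) = t^{-1/3}(L² - ‖x‖² t^{-1/3})²/192` solves the
thin-film equation `∂ₜu + ∇u·∇Δu + u·Δ²u = 0`
(equation (2.9) with `γ = 1` and mobility `f(u) = u`). -/
theorem self_similar_solves_thin_film (L : ℝ) (hL : 0 < L)
    (U : ℝ → EuclideanSpace ℝ (Fin 2) → ℝ)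
    (hU : ∀ s : ℝ, ∀ y : EuclideanSpace ℝ (Fin 2),
      U s y = s ^ (-(1 / 3) : ℝ) * (L ^ 2 - ‖y‖ ^ 2 * s ^ (-(1 / 3) : ℝ)) ^ 2 / 192) :
    ∀ t : ℝ, 0 < t → ∀ x : EuclideanSpace ℝ (Fin 2),
      deriv (fun s => U s x) t
        + (inner ℝ (gradient (U t) x) (gradient (fun y => lap2 (U t) y) x) : ℝ)
        + U t x * lap2 (fun y => lap2 (U t) y) x = 0 :=
  self_similar_solves_thin_film_general L U hU
end
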